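/- arXiv:1407.2988 — 5 statements merged into one kernel-verified Lean document; each statement's English description precedes it below -/
import Mathlib

section
/- Sequential composition of private mechanisms: If q₁ is (ε₁,δ₁)-differentially private and q₂ is (ε₂,δ₂)-differentially private with respect to the same adjacency relation Φ, and q₂'s randomness is independent of q₁'s, then the composed mechanism q(t) = (q₁(t), q₂(t)) is (ε₁+ε₂, δ₁+δ₂)-differentially private with respect to Φ. -/
open scoped ENNReal

lemma dp_key {R : Type*} (p q : R → ℝ≥0∞) (hq : (∑' r, q r) ≤ 1)
    (e δ : ℝ≥0∞) (he : e ≠ ∞)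
    (hdp : ∀ A : Set R, (∑' r : A, p r) ≤ e * (∑' r : A, q r) + δ)
    (g : R → ℝ≥0∞) (hg : ∀ r, g r ≤ 1) :
    (∑' r, p r * g r) ≤ e * (∑' r, q r * g r) + δ := by
  classical
  set B : Set R := {r | e * q r < p r} with hB
  have hsplit : ∀ f : R → ℝ≥0∞, (∑' r, f r) = (∑' r : B, f r) + (∑' r : (Bᶜ : Set R), f r) := by
    intro f
    exact (Summable.tsum_add_tsum_compl (f := f) ENNReal.summable ENNReal.summable).symm
  -- bound on Bᶜ
  have hBc : (∑' r : (Bᶜ : Set R), p r * g r) ≤ ∑' r : (Bᶜ : Set R), e * (q r * g r) := by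
    apply Summable.tsum_le_tsum _ ENNReal.summable ENNReal.summable
    rintro ⟨r, hr⟩
    have : p r ≤ e * q r := not_lt.mp hr
    calc p r * g r ≤ (e * q r) * g r := mul_le_mul_left this _
      _ = e * (q r * g r) := by ring
  -- bound on B
  have hsubB : (∑' r : B, q r) ≤ 1 := by
    refine le_trans ?_ hq
    rw [tsum_subtype]
    exact Summable.tsum_le_tsum (fun r => Set.indicator_le_self _ _ r) ENNReal.summable ENNReal.summable
  have hqB : (∑' r : B, e * q r) ≠ ∞ := by
    rw [ENNReal.tsum_mul_left]
    exact ENNReal.mul_ne_top he (ne_top_of_le_ne_top ENNReal.one_ne_top hsubB)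
  have hsub : (∑' r : B, (p r - e * q r)) ≤ δ := by
    have hadd : (∑' r : B, (p r - e * q r)) + (∑' r : B, e * q r) = ∑' r : B, p r := by
      rw [← ENNReal.tsum_add]
      congr 1
      funext r
      exact tsub_add_cancel_of_le (le_of_lt r.2)
    have h2 : (∑' r : B, (p r - e * q r)) + (∑' r : B, e * q r)
        ≤ δ + (∑' r : B, e * q r) := by
      rw [hadd]
      calc (∑' r : B, p r) ≤ e * (∑' r : B, q r) + δ := hdp B
        _ = δ + ∑' r : B, e * q r := by rw [ENNReal.tsum_mul_left]; ring
    exact (ENNReal.add_le_add_iff_right hqB).mp h2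
  have hBb : (∑' r : B, p r * g r) ≤ (∑' r : B, e * (q r * g r)) + δ := by
    calc (∑' r : B, p r * g r)
        ≤ ∑' r : B, (e * (q r * g r) + (p r - e * q r)) := by
          apply Summable.tsum_le_tsum _ ENNReal.summable ENNReal.summable
          rintro ⟨r, hr⟩
          have hle : e * q r ≤ p r := le_of_lt hr
          calc p r * g r = (e * q r + (p r - e * q r)) * g r := by
                rw [add_tsub_cancel_of_le hle]
            _ = e * (q r * g r) + (p r - e * q r) * g r := by ring
            _ ≤ e * (q r * g r) + (p r - e * q r) * 1 := by
                gcongr; exact hg r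
            _ = e * (q r * g r) + (p r - e * q r) := by rw [mul_one]
      _ = (∑' r : B, e * (q r * g r)) + ∑' r : B, (p r - e * q r) := ENNReal.tsum_add
      _ ≤ (∑' r : B, e * (q r * g r)) + δ := by gcongr
  calc (∑' r, p r * g r) = (∑' r : B, p r * g r) + (∑' r : (Bᶜ : Set R), p r * g r) := hsplit _
    _ ≤ ((∑' r : B, e * (q r * g r)) + δ) + (∑' r : (Bᶜ : Set R), e * (q r * g r)) := by gcongr
    _ = ((∑' r : B, e * (q r * g r)) + (∑' r : (Bᶜ : Set R), e * (q r * g r))) + δ := by ring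
    _ = (∑' r, e * (q r * g r)) + δ := congrArg (· + δ) (hsplit (fun r => e * (q r * g r))).symm
    _ = e * (∑' r, q r * g r) + δ := by rw [ENNReal.tsum_mul_left]

lemma dp_slice {R₁ R₂ : Type*} [Countable R₁] [Countable R₂]
    (f : R₁ → ℝ≥0∞) (g : R₂ → ℝ≥0∞) (A : Set (R₁ × R₂)) :
    (∑' p : A, f (p : R₁ × R₂).1 * g (p : R₁ × R₂).2)
      = ∑' r₁, f r₁ * ∑' r₂ : {r₂ | (r₁, r₂) ∈ A}, g r₂ := by
  classical
  have key : ∀ r₁ r₂, A.indicator (fun p => f p.1 * g p.2) (r₁, r₂)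
      = f r₁ * ({r₂ | (r₁, r₂) ∈ A} : Set R₂).indicator g r₂ := by
    intro r₁ r₂
    by_cases h : (r₁, r₂) ∈ A
    · rw [Set.indicator_of_mem h, Set.indicator_of_mem (show r₂ ∈ {r₂ | (r₁, r₂) ∈ A} from h)]
    · rw [Set.indicator_of_notMem h,
        Set.indicator_of_notMem (show r₂ ∉ {r₂ | (r₁, r₂) ∈ A} from h), mul_zero]
  calc (∑' p : A, f (p : R₁ × R₂).1 * g (p : R₁ × R₂).2)
      = ∑' x : R₁ × R₂, A.indicator (fun p => f p.1 * g p.2) x :=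
        tsum_subtype A (fun p => f p.1 * g p.2)
    _ = ∑' r₁, ∑' r₂, A.indicator (fun p => f p.1 * g p.2) (r₁, r₂) :=
        ENNReal.tsum_prod (f := fun a b => A.indicator (fun p => f p.1 * g p.2) (a, b))
    _ = ∑' r₁, ∑' r₂, f r₁ * ({r₂ | (r₁, r₂) ∈ A} : Set R₂).indicator g r₂ := by
        simp_rw [key]
    _ = ∑' r₁, f r₁ * ∑' r₂ : {r₂ | (r₁, r₂) ∈ A}, g r₂ := by
        congr 1; funext r₁; rw [ENNReal.tsum_mul_left, tsum_subtype]

/-- sequential composition of differentially private mechanisms.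
`q₁ : T → D(R₁)` is (ε₁,δ₁)-DP, `q₂ : T → D(R₂)` is (ε₂,δ₂)-DP (both w.r.t. Φ),
both returning (full) distributions; the product mechanism
`q t (r₁,r₂) = q₁ t r₁ * q₂ t r₂` (independence of the randomness) is
(ε₁+ε₂, δ₁+δ₂)-DP w.r.t. Φ. -/
theorem dp_composition {T R₁ R₂ : Type*} [Countable R₁] [Countable R₂]
    (q₁ : T → R₁ → ℝ≥0∞) (q₂ : T → R₂ → ℝ≥0∞)
    (hq₁ : ∀ t, (∑' r, q₁ t r) = 1) (hq₂ : ∀ t, (∑' r, q₂ t r) = 1)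
    (Φ : T → T → Prop) (ε₁ ε₂ δ₁ δ₂ : ℝ)
    (hε₁ : 0 ≤ ε₁) (hε₂ : 0 ≤ ε₂) (hδ₁ : 0 ≤ δ₁) (hδ₂ : 0 ≤ δ₂)
    (hdp₁ : ∀ t₁ t₂, Φ t₁ t₂ → ∀ A : Set R₁,
        (∑' r : A, q₁ t₁ r) ≤
          ENNReal.ofReal (Real.exp ε₁) * (∑' r : A, q₁ t₂ r) + ENNReal.ofReal δ₁)
    (hdp₂ : ∀ t₁ t₂, Φ t₁ t₂ → ∀ A : Set R₂,
        (∑' r : A, q₂ t₁ r) ≤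
          ENNReal.ofReal (Real.exp ε₂) * (∑' r : A, q₂ t₂ r) + ENNReal.ofReal δ₂) :
    ∀ t₁ t₂, Φ t₁ t₂ → ∀ A : Set (R₁ × R₂),
        (∑' p : A, q₁ t₁ (p : R₁ × R₂).1 * q₂ t₁ (p : R₁ × R₂).2) ≤
          ENNReal.ofReal (Real.exp (ε₁ + ε₂)) *
            (∑' p : A, q₁ t₂ (p : R₁ × R₂).1 * q₂ t₂ (p : R₁ × R₂).2) +
          ENNReal.ofReal (δ₁ + δ₂) := by
  intro t₁ t₂ hΦ A
  classical
  set E₁ := ENNReal.ofReal (Real.exp ε₁) with hE₁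
  set E₂ := ENNReal.ofReal (Real.exp ε₂) with hE₂
  set d₁ := ENNReal.ofReal δ₁ with hd₁
  set d₂ := ENNReal.ofReal δ₂ with hd₂
  set S : T → R₁ → ℝ≥0∞ := fun t r₁ => ∑' r₂ : {r₂ | (r₁, r₂) ∈ A}, q₂ t r₂ with hS
  rw [dp_slice (q₁ t₁) (q₂ t₁) A, dp_slice (q₁ t₂) (q₂ t₂) A]
  set g : R₁ → ℝ≥0∞ := fun r₁ => min 1 (E₂ * S t₂ r₁) with hg
  have hg1 : ∀ r₁, g r₁ ≤ 1 := fun r₁ => min_le_left _ _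
  have hSle1 : ∀ t r₁, S t r₁ ≤ 1 := by
    intro t r₁
    calc S t r₁ = ∑' r₂, ({r₂ | (r₁, r₂) ∈ A} : Set R₂).indicator (q₂ t) r₂ :=
          tsum_subtype _ _
      _ ≤ ∑' r₂, q₂ t r₂ :=
          Summable.tsum_le_tsum (fun r => Set.indicator_le_self _ _ r) ENNReal.summable ENNReal.summable
      _ = 1 := hq₂ t
  have hS1 : ∀ r₁, S t₁ r₁ ≤ g r₁ + d₂ := by
    intro r₁
    rcases le_total (E₂ * S t₂ r₁) 1 with h | h
    · rw [hg]; simp only [min_eq_right h]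
      exact hdp₂ t₁ t₂ hΦ _
    · rw [hg]; simp only [min_eq_left h]
      exact le_trans (hSle1 t₁ r₁) le_self_add
  have step1 : (∑' r₁, q₁ t₁ r₁ * S t₁ r₁) ≤ (∑' r₁, q₁ t₁ r₁ * g r₁) + d₂ := by
    calc (∑' r₁, q₁ t₁ r₁ * S t₁ r₁)
        ≤ ∑' r₁, (q₁ t₁ r₁ * g r₁ + q₁ t₁ r₁ * d₂) := by
          apply Summable.tsum_le_tsum _ ENNReal.summable ENNReal.summable
          intro r₁
          rw [← mul_add]
          exact mul_le_mul_right (hS1 r₁) _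
      _ = (∑' r₁, q₁ t₁ r₁ * g r₁) + ∑' r₁, q₁ t₁ r₁ * d₂ := ENNReal.tsum_add
      _ = (∑' r₁, q₁ t₁ r₁ * g r₁) + d₂ := by
          rw [ENNReal.tsum_mul_right, hq₁ t₁, one_mul]
  have step2 : (∑' r₁, q₁ t₁ r₁ * g r₁) ≤ E₁ * (∑' r₁, q₁ t₂ r₁ * g r₁) + d₁ :=
    dp_key (q₁ t₁) (q₁ t₂) (le_of_eq (hq₁ t₂)) E₁ d₁ ENNReal.ofReal_ne_top
      (hdp₁ t₁ t₂ hΦ) g hg1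
  have step3 : (∑' r₁, q₁ t₂ r₁ * g r₁) ≤ E₂ * (∑' r₁, q₁ t₂ r₁ * S t₂ r₁) := by
    rw [← ENNReal.tsum_mul_left]
    apply Summable.tsum_le_tsum _ ENNReal.summable ENNReal.summable
    intro r₁
    calc q₁ t₂ r₁ * g r₁ ≤ q₁ t₂ r₁ * (E₂ * S t₂ r₁) := mul_le_mul_right (min_le_right _ _) _
      _ = E₂ * (q₁ t₂ r₁ * S t₂ r₁) := by ring
  have hEE : ENNReal.ofReal (Real.exp (ε₁ + ε₂)) = E₁ * E₂ := by
    rw [Real.exp_add, ENNReal.ofReal_mul (Real.exp_nonneg ε₁)]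
  have hdd : ENNReal.ofReal (δ₁ + δ₂) = d₁ + d₂ := ENNReal.ofReal_add hδ₁ hδ₂
  calc (∑' r₁, q₁ t₁ r₁ * S t₁ r₁)
      ≤ (∑' r₁, q₁ t₁ r₁ * g r₁) + d₂ := step1
    _ ≤ (E₁ * (∑' r₁, q₁ t₂ r₁ * g r₁) + d₁) + d₂ := by gcongr
    _ ≤ (E₁ * (E₂ * (∑' r₁, q₁ t₂ r₁ * S t₂ r₁)) + d₁) + d₂ := by gcongr
    _ = (E₁ * E₂) * (∑' r₁, q₁ t₂ r₁ * S t₂ r₁) + (d₁ + d₂) := by ring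
    _ = ENNReal.ofReal (Real.exp (ε₁ + ε₂)) * (∑' r₁, q₁ t₂ r₁ * S t₂ r₁)
          + ENNReal.ofReal (δ₁ + δ₂) := by rw [hEE, hdd]
end

section
/- Lifting of equality characterizes ε-distance: for sub-distributions μ₁, μ₂ on a countable set A and ε, δ ≥ 0, the lifted relation =^{ε,δ} holds between μ₁ and μ₂ (i.e., there exists a sub-distribution μ on A×A supported on the diagonal with π₁μ ≤ μ₁, π₂μ ≤ μ₂, Δ_ε(μ₁, π₁μ) ≤ δ and Δ_ε(μ₂, π₂μ) ≤ δ) if and only if Δ_ε(μ₁, μ₂) ≤ δ and Δ_ε(μ₂, μ₁) ≤ δ. -/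
open scoped ENNReal

/-- ε-distance `Δ_ε(μ,ν) = sup_S max(μ(S) - e^ε ν(S), 0)`. -/
noncomputable def eDist {A : Type*} (ε : ℝ) (μ ν : A → ℝ≥0∞) : ℝ≥0∞ :=
  ⨆ S : Set A, (∑' a : S, μ a) - ENNReal.ofReal (Real.exp ε) * ∑' a : S, ν a

/-- First marginal of a sub-distribution on pairs. -/
noncomputable def fstMarg {A B : Type*} (μ : A × B → ℝ≥0∞) : A → ℝ≥0∞ :=
  fun a => ∑' b, μ (a, b)

/-- Second marginal of a sub-distribution on pairs. -/
noncomputable def sndMarg {A B : Type*} (μ : A × B → ℝ≥0∞) : B → ℝ≥0∞ :=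
  fun b => ∑' a, μ (a, b)

/-- The (ε,δ)-lifting of a relation Φ to sub-distributions: there exists a
witness sub-distribution on pairs supported in Φ, whose marginals are dominated
by the given distributions and are at ε-distance at most δ from them. -/
def lift {A B : Type*} (Φ : A → B → Prop) (ε δ : ℝ)
    (μ₁ : A → ℝ≥0∞) (μ₂ : B → ℝ≥0∞) : Prop :=
  ∃ μ : A × B → ℝ≥0∞,
    (∑' p, μ p) ≤ 1 ∧
    (∀ p, μ p ≠ 0 → Φ p.1 p.2) ∧
    (∀ a, fstMarg μ a ≤ μ₁ a) ∧
    (∀ b, sndMarg μ b ≤ μ₂ b) ∧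
    eDist ε μ₁ (fstMarg μ) ≤ ENNReal.ofReal δ ∧
    eDist ε μ₂ (sndMarg μ) ≤ ENNReal.ofReal δ

lemma eDist_anti {A : Type*} (ε : ℝ) (μ : A → ℝ≥0∞) {ν ν' : A → ℝ≥0∞}
    (h : ∀ a, ν a ≤ ν' a) : eDist ε μ ν' ≤ eDist ε μ ν := by
  refine iSup_le fun S => le_trans ?_ (le_iSup
    (fun S : Set A => (∑' a : S, μ a) - ENNReal.ofReal (Real.exp ε) * ∑' a : S, ν a) S)
  gcongr
  exact h _

lemma eDist_min {A : Type*} {ε : ℝ} (hε : 0 ≤ ε) (μ₁ μ₂ : A → ℝ≥0∞)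
    (hμ₂ : (∑' a, μ₂ a) ≠ ∞) :
    eDist ε μ₁ (fun a => min (μ₁ a) (μ₂ a)) ≤ eDist ε μ₁ μ₂ := by
  set e := ENNReal.ofReal (Real.exp ε) with he
  have h1e : 1 ≤ e := by
    rw [he]; exact ENNReal.one_le_ofReal.mpr (Real.one_le_exp hε)
  have heT : e ≠ ∞ := by rw [he]; exact ENNReal.ofReal_ne_top
  refine iSup_le fun S => ?_
  set m : A → ℝ≥0∞ := fun a => min (μ₁ a) (μ₂ a) with hm
  set T : Set A := {a | a ∈ S ∧ e * μ₂ a < μ₁ a} with hT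
  have key : (∑' a : S, (μ₁ a - e * m a)) ≤ ∑' a : T, (μ₁ a - e * μ₂ a) := by
    rw [tsum_subtype S (fun x => μ₁ x - e * m x), tsum_subtype T (fun x => μ₁ x - e * μ₂ x)]
    refine ENNReal.tsum_le_tsum fun a => ?_
    by_cases hS : a ∈ S
    · rw [Set.indicator_of_mem hS]
      by_cases hTa : e * μ₂ a < μ₁ a
      · have haT : a ∈ T := ⟨hS, hTa⟩
        rw [Set.indicator_of_mem haT]
        have hma : m a = μ₂ a :=
          min_eq_right (le_of_lt (lt_of_le_of_lt (le_mul_of_one_le_left zero_le h1e) hTa))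
        rw [hma]
      · have hle : μ₁ a ≤ e * m a := by
          rcases le_total (μ₁ a) (μ₂ a) with h | h
          · have h' : m a = μ₁ a := min_eq_left h
            rw [h']; exact le_mul_of_one_le_left zero_le h1e
          · have h' : m a = μ₂ a := min_eq_right h
            rw [h']; exact not_lt.mp hTa
        rw [tsub_eq_zero_of_le hle]
        exact zero_le
    · rw [Set.indicator_of_notMem hS]; exact zero_le
  have hfin : e * (∑' a : T, μ₂ a) ≠ ∞ := by
    refine ENNReal.mul_ne_top heT (ne_top_of_le_ne_top hμ₂ ?_)
    exact ENNReal.tsum_comp_le_tsum_of_injective Subtype.val_injective μ₂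
  have key2 : (∑' a : T, (μ₁ a - e * μ₂ a)) ≤ (∑' a : T, μ₁ a) - e * ∑' a : T, μ₂ a := by
    refine ENNReal.le_sub_of_add_le_right hfin ?_
    rw [← ENNReal.tsum_mul_left, ← ENNReal.tsum_add]
    refine ENNReal.tsum_le_tsum fun a => ?_
    rw [tsub_add_cancel_of_le (le_of_lt a.2.2)]
  rw [tsub_le_iff_right]
  calc ∑' a : S, μ₁ a
      ≤ ∑' a : S, ((μ₁ a - e * m a) + e * m a) :=
        ENNReal.tsum_le_tsum fun a => le_tsub_add
    _ = (∑' a : S, (μ₁ a - e * m a)) + e * ∑' a : S, m a := by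
        rw [ENNReal.tsum_add, ENNReal.tsum_mul_left]
    _ ≤ eDist ε μ₁ μ₂ + e * ∑' a : S, m a := by
        refine add_le_add_left (key.trans (key2.trans ?_)) _
        exact le_iSup (fun S : Set A => (∑' a : S, μ₁ a) - e * ∑' a : S, μ₂ a) T

/-- lifting of equality characterizes ε-distance:
`μ₁ =^{ε,δ} μ₂` iff `Δ_ε(μ₁,μ₂) ≤ δ` and `Δ_ε(μ₂,μ₁) ≤ δ`. -/
theorem lift_eq_iff_eDist {A : Type*} [Countable A] (ε δ : ℝ)
    (hε : 0 ≤ ε) (hδ : 0 ≤ δ)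
    (μ₁ μ₂ : A → ℝ≥0∞) (hμ₁ : (∑' a, μ₁ a) ≤ 1) (hμ₂ : (∑' a, μ₂ a) ≤ 1) :
    lift (fun a b => a = b) ε δ μ₁ μ₂ ↔
      (eDist ε μ₁ μ₂ ≤ ENNReal.ofReal δ ∧ eDist ε μ₂ μ₁ ≤ ENNReal.ofReal δ) := by
  classical
  constructor
  · rintro ⟨w, hw1, hdiag, hf, hs, hd1, hd2⟩
    have heq : sndMarg w = fstMarg w := by
      funext a
      have h1 : fstMarg w a = w (a, a) :=
        tsum_eq_single a fun b hb => by
          by_contra hne; exact hb (hdiag (a, b) hne).symm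
      have h2 : sndMarg w a = w (a, a) :=
        tsum_eq_single a fun b hb => by
          by_contra hne; exact hb (hdiag (b, a) hne)
      rw [h1, h2]
    constructor
    · calc eDist ε μ₁ μ₂ ≤ eDist ε μ₁ (sndMarg w) := eDist_anti ε μ₁ hs
        _ = eDist ε μ₁ (fstMarg w) := by rw [heq]
        _ ≤ ENNReal.ofReal δ := hd1
    · calc eDist ε μ₂ μ₁ ≤ eDist ε μ₂ (fstMarg w) := eDist_anti ε μ₂ hf
        _ = eDist ε μ₂ (sndMarg w) := by rw [heq]
        _ ≤ ENNReal.ofReal δ := hd2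
  · rintro ⟨h1, h2⟩
    set w : A × A → ℝ≥0∞ := fun p => if p.1 = p.2 then min (μ₁ p.1) (μ₂ p.1) else 0 with hw
    have hfst : fstMarg w = fun a => min (μ₁ a) (μ₂ a) := by
      funext a
      simp only [fstMarg, hw]
      rw [tsum_eq_single a (fun b hb => if_neg (fun h : a = b => hb h.symm))]
      simp
    have hsnd : sndMarg w = fun b => min (μ₁ b) (μ₂ b) := by
      funext b
      simp only [sndMarg, hw]
      rw [tsum_eq_single b (fun a ha => if_neg (fun h : a = b => ha h))]
      simp
    refine ⟨w, ?_, ?_, ?_, ?_, ?_, ?_⟩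
    · rw [ENNReal.tsum_prod']
      calc (∑' a, ∑' b, w (a, b)) = ∑' a, fstMarg w a := rfl
        _ = ∑' a, min (μ₁ a) (μ₂ a) := by rw [hfst]
        _ ≤ ∑' a, μ₁ a := ENNReal.tsum_le_tsum fun a => min_le_left _ _
        _ ≤ 1 := hμ₁
    · intro p hp
      by_contra h
      exact hp (if_neg h)
    · intro a
      rw [hfst]; exact min_le_left _ _
    · intro b
      rw [hsnd]; exact min_le_right _ _
    · rw [hfst]
      exact (eDist_min hε μ₁ μ₂ (ne_top_of_le_ne_top ENNReal.one_ne_top hμ₂)).trans h1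
    · rw [hsnd]
      have : (fun b => min (μ₁ b) (μ₂ b)) = fun b => min (μ₂ b) (μ₁ b) := by
        funext b; rw [min_comm]
      rw [this]
      exact (eDist_min hε μ₂ μ₁ (ne_top_of_le_ne_top ENNReal.one_ne_top hμ₁)).trans h2
end

section
/- Composition of liftings through bind: Suppose for all m₁ Ψ m₂ the distributions f(m₁) and f(m₂) are related by the lifting Φ^{ε,δ}. Then for any sub-distributions μ₁, μ₂ related by Ψ^{ε',δ'}, the bound distributions f⋆μ₁ and f⋆μ₂ are related by Φ^{ε+ε', δ+δ'}. -/
open scoped ENNReal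

/-- Bind of a sub-distribution with a kernel: `(f⋆μ)(m') = ∑_m f m m' · μ m`. -/
noncomputable def bindD {A B : Type*} (f : A → B → ℝ≥0∞) (μ : A → ℝ≥0∞) : B → ℝ≥0∞ :=
  fun b => ∑' a, f a b * μ a

lemma tsum_subtype_le' {A : Type*} (f : A → ℝ≥0∞) (S : Set A) :
    (∑' a : S, f a) ≤ ∑' a, f a :=
  ENNReal.tsum_comp_le_tsum_of_injective Subtype.val_injective f

lemma le_eDist_set {A : Type*} (ε : ℝ) (μ ν : A → ℝ≥0∞) (S : Set A) :
    (∑' a : S, μ a) - ENNReal.ofReal (Real.exp ε) * (∑' a : S, ν a) ≤ eDist ε μ ν :=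
  le_iSup (fun S : Set A => (∑' a : S, μ a) - ENNReal.ofReal (Real.exp ε) * ∑' a : S, ν a) S

lemma tsum_tsub_le_eDist {A : Type*} (ε : ℝ) (μ ν : A → ℝ≥0∞) (hν : (∑' a, ν a) ≠ ∞) :
    (∑' a, (μ a - ENNReal.ofReal (Real.exp ε) * ν a)) ≤ eDist ε μ ν := by
  set E := ENNReal.ofReal (Real.exp ε) with hE
  have hEtop : E ≠ ∞ := ENNReal.ofReal_ne_top
  set T : Set A := {a | E * ν a < μ a} with hT
  have hsupp : Function.support (fun a => μ a - E * ν a) ⊆ T := by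
    intro a ha
    simp only [Function.mem_support, ne_eq, tsub_eq_zero_iff_le] at ha
    exact lt_of_not_ge ha
  have h1 : (∑' a, (μ a - E * ν a)) = ∑' a : T, (μ a - E * ν a) :=
    (tsum_subtype_eq_of_support_subset hsupp).symm
  have hfin : (∑' a : T, E * ν a) ≠ ∞ := by
    rw [ENNReal.tsum_mul_left]
    exact ENNReal.mul_ne_top hEtop (ne_top_of_le_ne_top hν (tsum_subtype_le' ν T))
  have h2 : (∑' a : T, (μ a - E * ν a)) + (∑' a : T, E * ν a) = ∑' a : T, μ a := by
    rw [← ENNReal.tsum_add]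
    exact tsum_congr fun a => tsub_add_cancel_of_le a.2.le
  have h3 : (∑' a : T, (μ a - E * ν a)) = (∑' a : T, μ a) - (∑' a : T, E * ν a) :=
    ENNReal.eq_sub_of_add_eq hfin h2
  rw [h1, h3, ENNReal.tsum_mul_left]
  exact le_eDist_set ε μ ν T

lemma key_eDist {M : Type*} {ε δ ε' δ' : ℝ} (hδ : 0 ≤ δ) (hδ' : 0 ≤ δ')
    (f : M → M → ℝ≥0∞) (hf : ∀ m, (∑' m', f m m') ≤ 1)
    (μ₁ : M → ℝ≥0∞) (hμ₁ : (∑' m, μ₁ m) ≤ 1)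
    (ν : M × M → ℝ≥0∞) (hν : (∑' q, ν q) ≤ 1)
    (π : M × M → M) (θ : M × M → M → ℝ≥0∞)
    (hθ : ∀ q, ν q ≠ 0 → eDist ε (f (π q)) (θ q) ≤ ENNReal.ofReal δ)
    (w : M → ℝ≥0∞)
    (hw : ∀ k : M → ℝ≥0∞, (∑' m, k m * w m) = ∑' q, k (π q) * ν q)
    (hd : eDist ε' μ₁ w ≤ ENNReal.ofReal δ') :
    eDist (ε + ε') (bindD f μ₁) (fun a => ∑' q, θ q a * ν q) ≤ ENNReal.ofReal (δ + δ') := by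
  have hEpos : (0:ℝ) < Real.exp ε := Real.exp_pos ε
  set E := ENNReal.ofReal (Real.exp ε) with hE
  set E' := ENNReal.ofReal (Real.exp ε') with hE'
  have hE0 : E ≠ 0 := by
    simp [hE, ENNReal.ofReal_eq_zero, not_le, hEpos]
  have hEtop : E ≠ ∞ := ENNReal.ofReal_ne_top
  have hwfin : (∑' m, w m) ≠ ∞ := by
    have h1 : (∑' m, (1:ℝ≥0∞) * w m) = ∑' q, (1:ℝ≥0∞) * ν q := hw (fun _ => 1)
    simp only [one_mul] at h1
    rw [h1]
    exact ne_top_of_le_ne_top ENNReal.one_ne_top hν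
  -- the global excess mass
  set s : M → ℝ≥0∞ := fun m => μ₁ m - E' * w m with hs_def
  have hs : (∑' m, s m) ≤ ENNReal.ofReal δ' :=
    le_trans (tsum_tsub_le_eDist ε' μ₁ w hwfin) hd
  have hμs : ∀ m, μ₁ m ≤ E' * w m + s m := by
    intro m
    rw [add_comm]
    exact le_tsub_add
  simp only [eDist]
  refine iSup_le fun S => ?_
  rw [tsub_le_iff_right]
  set g : M → ℝ≥0∞ := fun m => ∑' a : S, f m a with hg
  have hg1 : ∀ m, g m ≤ 1 := fun m => le_trans (tsum_subtype_le' _ _) (hf m)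
  set k : M → ℝ≥0∞ := fun m => E⁻¹ * (g m - ENNReal.ofReal δ) with hk
  have hEk : ∀ m, g m ≤ E * k m + ENNReal.ofReal δ := by
    intro m
    have h1 : E * k m = g m - ENNReal.ofReal δ := by
      rw [hk, ← mul_assoc, ENNReal.mul_inv_cancel hE0 hEtop, one_mul]
    rw [h1]
    exact le_tsub_add
  have hkE : ∀ m, k m ≤ E⁻¹ := by
    intro m
    calc k m ≤ E⁻¹ * 1 := by
          rw [hk]; exact mul_le_mul_right (le_trans tsub_le_self (hg1 m)) _
      _ = E⁻¹ := mul_one _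
  set H : M × M → ℝ≥0∞ := fun q => ∑' a : S, θ q a with hH
  -- rewrite both sums
  have hA : (∑' a : S, bindD f μ₁ a) = ∑' m, g m * μ₁ m := by
    simp only [bindD]
    rw [ENNReal.tsum_comm]
    exact tsum_congr fun m => ENNReal.tsum_mul_right
  have hB : (∑' a : S, ∑' q, θ q a * ν q) = ∑' q, H q * ν q := by
    rw [ENNReal.tsum_comm]
    exact tsum_congr fun q => ENNReal.tsum_mul_right
  -- pointwise bound k (π q) ≤ H q on the support of ν
  have hkH : ∀ q, k (π q) * ν q ≤ H q * ν q := by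
    intro q
    rcases eq_or_ne (ν q) 0 with h0 | h0
    · simp [h0]
    have h2 : g (π q) - E * H q ≤ ENNReal.ofReal δ :=
      le_trans (le_eDist_set ε (f (π q)) (θ q) S) (hθ q h0)
    have h3 : g (π q) ≤ ENNReal.ofReal δ + E * H q := tsub_le_iff_right.mp h2
    have h4 : g (π q) - ENNReal.ofReal δ ≤ E * H q :=
      tsub_le_iff_right.mpr (by rwa [add_comm] at h3)
    have h5 : k (π q) ≤ H q := by
      calc k (π q) = E⁻¹ * (g (π q) - ENNReal.ofReal δ) := rfl
        _ ≤ E⁻¹ * (E * H q) := mul_le_mul_right h4 _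
        _ = H q := by rw [← mul_assoc, ENNReal.inv_mul_cancel hE0 hEtop, one_mul]
    exact mul_le_mul_left h5 _
  have step2 : (∑' m, k m * μ₁ m) ≤ E' * (∑' q, H q * ν q) + E⁻¹ * ENNReal.ofReal δ' := by
    calc (∑' m, k m * μ₁ m) ≤ ∑' m, k m * (E' * w m + s m) :=
          ENNReal.tsum_le_tsum fun m => mul_le_mul_right (hμs m) _
      _ = ∑' m, (E' * (k m * w m) + k m * s m) := by
          refine tsum_congr fun m => ?_
          rw [mul_add, mul_left_comm]
      _ = E' * (∑' m, k m * w m) + ∑' m, k m * s m := by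
          rw [ENNReal.tsum_add, ENNReal.tsum_mul_left]
      _ ≤ E' * (∑' q, H q * ν q) + E⁻¹ * ENNReal.ofReal δ' := by
          gcongr
          · rw [hw k]
            exact ENNReal.tsum_le_tsum hkH
          · calc (∑' m, k m * s m) ≤ ∑' m, E⁻¹ * s m :=
                  ENNReal.tsum_le_tsum fun m => mul_le_mul_left (hkE m) _
              _ = E⁻¹ * ∑' m, s m := ENNReal.tsum_mul_left
              _ ≤ E⁻¹ * ENNReal.ofReal δ' := mul_le_mul_right hs _
  have step1 : (∑' a : S, bindD f μ₁ a)
      ≤ E * (∑' m, k m * μ₁ m) + ENNReal.ofReal δ := by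
    rw [hA]
    calc (∑' m, g m * μ₁ m) ≤ ∑' m, (E * k m + ENNReal.ofReal δ) * μ₁ m :=
          ENNReal.tsum_le_tsum fun m => mul_le_mul_left (hEk m) _
      _ = E * (∑' m, k m * μ₁ m) + ENNReal.ofReal δ * ∑' m, μ₁ m := by
          simp_rw [add_mul, mul_assoc]
          rw [ENNReal.tsum_add, ENNReal.tsum_mul_left, ENNReal.tsum_mul_left]
      _ ≤ E * (∑' m, k m * μ₁ m) + ENNReal.ofReal δ := by
          gcongr
          calc ENNReal.ofReal δ * (∑' m, μ₁ m) ≤ ENNReal.ofReal δ * 1 :=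
                mul_le_mul_right hμ₁ _
            _ = ENNReal.ofReal δ := mul_one _
  calc (∑' a : S, bindD f μ₁ a)
      ≤ E * (E' * (∑' q, H q * ν q) + E⁻¹ * ENNReal.ofReal δ') + ENNReal.ofReal δ := by
        exact le_trans step1 (add_le_add_left (mul_le_mul_right step2 E) _)
    _ = E * E' * (∑' q, H q * ν q) + ENNReal.ofReal δ' + ENNReal.ofReal δ := by
        rw [mul_add, ← mul_assoc, ← mul_assoc, ENNReal.mul_inv_cancel hE0 hEtop, one_mul]
    _ = ENNReal.ofReal (δ + δ') + ENNReal.ofReal (Real.exp (ε + ε')) * ∑' a : S, (fun a => ∑' q, θ q a * ν q) a := by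
        rw [hB, ENNReal.ofReal_add hδ hδ', Real.exp_add,
          ENNReal.ofReal_mul (le_of_lt hEpos)]
        ring

/-- composition of liftings through bind: if `f m₁` and `f m₂`
are related by `Φ^{ε,δ}` whenever `m₁ Ψ m₂`, and `μ₁ Ψ^{ε',δ'} μ₂`, then
`f⋆μ₁` and `f⋆μ₂` are related by `Φ^{ε+ε', δ+δ'}`. -/
theorem lift_bind {M : Type*} [Countable M]
    (Ψ Φ : M → M → Prop) (ε δ ε' δ' : ℝ)
    (hε : 0 ≤ ε) (hδ : 0 ≤ δ) (hε' : 0 ≤ ε') (hδ' : 0 ≤ δ')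
    (f : M → M → ℝ≥0∞) (hf : ∀ m, (∑' m', f m m') ≤ 1)
    (hlift : ∀ m₁ m₂, Ψ m₁ m₂ → lift Φ ε δ (f m₁) (f m₂))
    (μ₁ μ₂ : M → ℝ≥0∞) (hμ₁ : (∑' m, μ₁ m) ≤ 1) (hμ₂ : (∑' m, μ₂ m) ≤ 1)
    (hμ : lift Ψ ε' δ' μ₁ μ₂) :
    lift Φ (ε + ε') (δ + δ') (bindD f μ₁) (bindD f μ₂) := by
  classical
  obtain ⟨ν, hνmass, hνsupp, hνfst, hνsnd, hνd1, hνd2⟩ := hμ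
  -- choose per-pair witnesses
  set η : M × M → M × M → ℝ≥0∞ :=
    fun q => if h : Ψ q.1 q.2 then (hlift q.1 q.2 h).choose else fun _ => 0 with hη_def
  have hηmass : ∀ q, (∑' p, η q p) ≤ 1 := by
    intro q
    rw [hη_def]
    dsimp only
    split_ifs with h
    · exact (hlift q.1 q.2 h).choose_spec.1
    · simp
  have hηsupp : ∀ q p, η q p ≠ 0 → Φ p.1 p.2 := by
    intro q p
    rw [hη_def]
    dsimp only
    split_ifs with h
    · exact (hlift q.1 q.2 h).choose_spec.2.1 p
    · simp
  have hηspec : ∀ q, Ψ q.1 q.2 →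
      (∀ a, fstMarg (η q) a ≤ f q.1 a) ∧ (∀ b, sndMarg (η q) b ≤ f q.2 b) ∧
      eDist ε (f q.1) (fstMarg (η q)) ≤ ENNReal.ofReal δ ∧
      eDist ε (f q.2) (sndMarg (η q)) ≤ ENNReal.ofReal δ := by
    intro q h
    rw [hη_def]
    dsimp only
    rw [dif_pos h]
    exact (hlift q.1 q.2 h).choose_spec.2.2
  -- the combined witness
  set μ : M × M → ℝ≥0∞ := fun p => ∑' q, η q p * ν q with hμ_def
  -- marginals of μ
  have hfstμ : ∀ a, fstMarg μ a = ∑' q, fstMarg (η q) a * ν q := by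
    intro a
    simp only [fstMarg, hμ_def]
    rw [ENNReal.tsum_comm]
    exact tsum_congr fun q => ENNReal.tsum_mul_right
  have hsndμ : ∀ b, sndMarg μ b = ∑' q, sndMarg (η q) b * ν q := by
    intro b
    simp only [sndMarg, hμ_def]
    rw [ENNReal.tsum_comm]
    exact tsum_congr fun q => ENNReal.tsum_mul_right
  -- weighted sums against the marginals of ν
  have hwfst : ∀ k : M → ℝ≥0∞, (∑' m, k m * fstMarg ν m) = ∑' q, k q.1 * ν q := by
    intro k
    rw [ENNReal.tsum_prod']
    refine tsum_congr fun m => ?_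
    simp only [fstMarg]
    exact (ENNReal.tsum_mul_left).symm
  have hwsnd : ∀ k : M → ℝ≥0∞, (∑' m, k m * sndMarg ν m) = ∑' q, k q.2 * ν q := by
    intro k
    rw [ENNReal.tsum_prod', ENNReal.tsum_comm]
    refine tsum_congr fun m => ?_
    simp only [sndMarg]
    exact (ENNReal.tsum_mul_left).symm
  refine ⟨μ, ?_, ?_, ?_, ?_, ?_, ?_⟩
  · -- total mass
    calc (∑' p, μ p) = ∑' q, (∑' p, η q p) * ν q := by
          simp only [hμ_def]
          rw [ENNReal.tsum_comm]
          exact tsum_congr fun q => ENNReal.tsum_mul_right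
      _ ≤ ∑' q, 1 * ν q :=
          ENNReal.tsum_le_tsum fun q => mul_le_mul_left (hηmass q) _
      _ ≤ 1 := by simpa using hνmass
  · -- support
    intro p hp
    have : ∃ q, η q p * ν q ≠ 0 := by
      by_contra h
      push_neg at h
      exact hp (by simp only [hμ_def]; exact ENNReal.summable.tsum_eq_zero_iff |>.mpr h)
    obtain ⟨q, hq⟩ := this
    exact hηsupp q p fun h0 => hq (by rw [h0, zero_mul])
  · -- fst marginal domination
    intro a
    rw [hfstμ a]
    calc (∑' q, fstMarg (η q) a * ν q) ≤ ∑' q, f q.1 a * ν q := by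
          refine ENNReal.tsum_le_tsum fun q => ?_
          rcases eq_or_ne (ν q) 0 with h0 | h0
          · simp [h0]
          · exact mul_le_mul_left ((hηspec q (hνsupp q h0)).1 a) _
      _ = ∑' m, f m a * fstMarg ν m := (hwfst (fun m => f m a)).symm
      _ ≤ ∑' m, f m a * μ₁ m :=
          ENNReal.tsum_le_tsum fun m => mul_le_mul_right (hνfst m) _
      _ = bindD f μ₁ a := rfl
  · -- snd marginal domination
    intro b
    rw [hsndμ b]
    calc (∑' q, sndMarg (η q) b * ν q) ≤ ∑' q, f q.2 b * ν q := by
          refine ENNReal.tsum_le_tsum fun q => ?_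
          rcases eq_or_ne (ν q) 0 with h0 | h0
          · simp [h0]
          · exact mul_le_mul_left ((hηspec q (hνsupp q h0)).2.1 b) _
      _ = ∑' m, f m b * sndMarg ν m := (hwsnd (fun m => f m b)).symm
      _ ≤ ∑' m, f m b * μ₂ m :=
          ENNReal.tsum_le_tsum fun m => mul_le_mul_right (hνsnd m) _
      _ = bindD f μ₂ b := rfl
  · -- fst distance
    have := key_eDist (ε := ε) (ε' := ε') hδ hδ' f hf μ₁ hμ₁ ν hνmass Prod.fst
      (fun q => fstMarg (η q))
      (fun q h0 => (hηspec q (hνsupp q h0)).2.2.1)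
      (fstMarg ν) hwfst hνd1
    have heq : fstMarg μ = fun a => ∑' q, fstMarg (η q) a * ν q := funext hfstμ
    rw [heq]
    exact this
  · -- snd distance
    have := key_eDist (ε := ε) (ε' := ε') hδ hδ' f hf μ₂ hμ₂ ν hνmass Prod.snd
      (fun q => sndMarg (η q))
      (fun q h0 => (hηspec q (hνsupp q h0)).2.2.2)
      (sndMarg ν) hwsnd hνd2
    have heq : sndMarg μ = fun b => ∑' q, sndMarg (η q) b * ν q := funext hsndμ
    rw [heq]
    exact this
end

section
/- Frame rule for liftings: Let S be a relation preserved by a probabilistic program c (if (m₁,m₂) ∈ S and both ⟦c⟧m₁(m₁') ≠ 0 and ⟦c⟧m₂(m₂') ≠ 0 then (m₁',m₂') ∈ S). If for all (m₁,m₂) ∈ R the distributions ⟦c⟧m₁ and ⟦c⟧m₂ are related by the lifting Q^{ε,δ}, then for all (m₁,m₂) ∈ R ∩ S they are related by (Q ∩ S)^{ε,δ}. -/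
open scoped ENNReal

/-- frame rule for liftings.  If `S` is preserved by the
(probabilistic) program semantics `c` and `R` implies the lifting `Q^{ε,δ}` of
the output distributions, then `R ∩ S` implies the lifting `(Q ∩ S)^{ε,δ}`. -/
theorem lift_frame {M : Type*} [Countable M]
    (c : M → M → ℝ≥0∞) (S R Q : M → M → Prop) (ε δ : ℝ)
    (hS : ∀ m₁ m₂, S m₁ m₂ →
      ∀ m₁' m₂', c m₁ m₁' ≠ 0 → c m₂ m₂' ≠ 0 → S m₁' m₂')
    (hR : ∀ m₁ m₂, R m₁ m₂ → lift Q ε δ (c m₁) (c m₂)) :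
    ∀ m₁ m₂, R m₁ m₂ → S m₁ m₂ →
      lift (fun a b => Q a b ∧ S a b) ε δ (c m₁) (c m₂) := by
  intro m₁ m₂ hRm hSm
  obtain ⟨μ, h1, h2, h3, h4, h5, h6⟩ := hR m₁ m₂ hRm
  refine ⟨μ, h1, ?_, h3, h4, h5, h6⟩
  intro p hp
  have hle1 : μ p ≤ fstMarg μ p.1 := by
    simpa [fstMarg] using ENNReal.le_tsum (f := fun b => μ (p.1, b)) p.2
  have hle2 : μ p ≤ sndMarg μ p.2 := by
    simpa [sndMarg] using ENNReal.le_tsum (f := fun a => μ (a, p.2)) p.1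
  have hc1 : c m₁ p.1 ≠ 0 := fun h => hp (le_antisymm (by
    simpa [h] using hle1.trans (h3 p.1)) zero_le)
  have hc2 : c m₂ p.2 ≠ 0 := fun h => hp (le_antisymm (by
    simpa [h] using hle2.trans (h4 p.2)) zero_le)
  exact ⟨h2 p hp, hS m₁ m₂ hSm p.1 p.2 hc1 hc2⟩
end

section
/- Lifting from distance on identical sampling: if two sub-distributions ν₁, ν₂ on values satisfy Δ_ε(ν₁, ν₂) ≤ δ and Δ_ε(ν₂, ν₁) ≤ δ, then the distributions over memories obtained by assigning a sample from ν₁ (resp. ν₂) to variable x in memory m₁ (resp. m₂) are related by the lifting of the relation Q = {(m₁',m₂') | m₁'(x) = m₂'(x)} with parameters (ε, δ). -/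
open scoped ENNReal

open scoped Classical in
/-- Distribution over memories obtained by assigning to variable `x` a value
sampled from `ν` in initial memory `m`: `⟦x :$ ν⟧ m`. -/
noncomputable def assignD {Var V : Type*} [DecidableEq Var]
    (x : Var) (ν : V → ℝ≥0∞) (m : Var → V) : (Var → V) → ℝ≥0∞ :=
  fun m' => if m' = Function.update m x (m' x) then ν (m' x) else 0

section Aux

variable {Var V : Type*} [DecidableEq Var]

/-- Sum of `assignD` over a set of memories equals the sum of `ν` over the
corresponding set of values. -/
lemma tsum_assignD (x : Var) (ν : V → ℝ≥0∞) (m : Var → V) (S : Set (Var → V)) :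
    ∑' m' : S, assignD x ν m m' =
      ∑' v : {v : V | Function.update m x v ∈ S}, ν v := by
  classical
  rw [tsum_subtype, tsum_subtype]
  refine tsum_eq_tsum_of_ne_zero_bij (fun v => Function.update m x v.1) ?_ ?_ ?_
  · intro a b hab
    have := congrFun hab x
    simp only [Function.update_self] at this
    exact Subtype.ext this
  · intro m' hm'
    have h1 : m' ∈ S ∧ assignD x ν m m' ≠ 0 := by
      by_contra h
      simp only [Function.mem_support, ne_eq] at hm'
      apply hm'
      by_cases hS : m' ∈ S
      · simp only [Set.indicator_of_mem hS]
        by_contra h0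
        exact h ⟨hS, h0⟩
      · simp [Set.indicator_of_notMem hS]
    obtain ⟨hS, hne⟩ := h1
    have heq : m' = Function.update m x (m' x) := by
      by_contra h
      simp [assignD, h] at hne
    have hν : ν (m' x) ≠ 0 := by
      intro h0
      apply hne
      simp [assignD, ← heq, h0]
    refine ⟨⟨m' x, ?_⟩, heq.symm⟩
    simp only [Function.mem_support, ne_eq]
    rw [Set.indicator_of_mem (by simpa [Set.mem_setOf_eq, ← heq] using hS)]
    exact hν
  · rintro ⟨v, hv⟩
    by_cases hS : Function.update m x v ∈ S
    · rw [Set.indicator_of_mem hS, Set.indicator_of_mem (by simpa using hS)]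
      simp [assignD, Function.update_self]
    · rw [Set.indicator_of_notMem hS, Set.indicator_of_notMem (by simpa using hS)]

/-- A distance bound: the excess of `ν₁` over `e^ε · min ν₁ ν₂` on any set is
at most `eDist ε ν₁ ν₂`. -/
lemma eDist_min_le (ε : ℝ) (hε : 0 ≤ ε) (ν₁ ν₂ : V → ℝ≥0∞) (T : Set V) :
    (∑' v : T, ν₁ v) - ENNReal.ofReal (Real.exp ε) * ∑' v : T, min (ν₁ v) (ν₂ v)
      ≤ eDist ε ν₁ ν₂ := by
  classical
  set e := ENNReal.ofReal (Real.exp ε) with he_def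
  have he : 1 ≤ e := by
    rw [he_def, ← ENNReal.ofReal_one]
    exact ENNReal.ofReal_le_ofReal (Real.one_le_exp hε)
  set P : Set V := {v | ν₂ v < ν₁ v} with hP_def
  have hsplit : ∀ f : V → ℝ≥0∞,
      (∑' v : T, f v) = (∑' v : (T ∩ P : Set V), f v) + ∑' v : (T \ P : Set V), f v := by
    intro f
    rw [tsum_subtype, tsum_subtype, tsum_subtype, ← ENNReal.tsum_add]
    congr 1
    funext v
    by_cases hv : v ∈ T <;> by_cases hp : v ∈ P <;>
      simp [Set.indicator_apply, hv, hp, Set.mem_inter_iff, Set.mem_diff]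
  have hmin1 : (∑' v : (T ∩ P : Set V), min (ν₁ v) (ν₂ v))
      = ∑' v : (T ∩ P : Set V), ν₂ v := by
    refine tsum_congr fun ⟨v, hv⟩ => ?_
    exact min_eq_right hv.2.le
  have hmin2 : (∑' v : (T \ P : Set V), min (ν₁ v) (ν₂ v))
      = ∑' v : (T \ P : Set V), ν₁ v := by
    refine tsum_congr fun ⟨v, hv⟩ => ?_
    have : ¬ ν₂ v < ν₁ v := hv.2
    exact min_eq_left (not_lt.mp this)
  rw [hsplit ν₁, hsplit (fun v => min (ν₁ v) (ν₂ v)), hmin1, hmin2, mul_add]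
  have key : (∑' v : (T ∩ P : Set V), ν₁ v) + (∑' v : (T \ P : Set V), ν₁ v)
      - (e * (∑' v : (T ∩ P : Set V), ν₂ v) + e * (∑' v : (T \ P : Set V), ν₁ v))
      ≤ ((∑' v : (T ∩ P : Set V), ν₁ v) - e * (∑' v : (T ∩ P : Set V), ν₂ v))
        + ((∑' v : (T \ P : Set V), ν₁ v) - e * (∑' v : (T \ P : Set V), ν₁ v)) :=
    add_tsub_add_le_tsub_add_tsub
  have hz : (∑' v : (T \ P : Set V), ν₁ v) - e * (∑' v : (T \ P : Set V), ν₁ v) = 0 :=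
    tsub_eq_zero_of_le (le_mul_of_one_le_left zero_le he)
  refine le_trans key ?_
  rw [hz, add_zero]
  exact le_iSup (fun S : Set V =>
    (∑' a : S, ν₁ a) - ENNReal.ofReal (Real.exp ε) * ∑' a : S, ν₂ a) (T ∩ P)

end Aux

/-- lifting from distance on identical sampling: if
`Δ_ε(ν₁,ν₂) ≤ δ` and `Δ_ε(ν₂,ν₁) ≤ δ`, then the memory distributions obtained
by assigning a sample of `ν₁` (resp. `ν₂`) to `x` in `m₁` (resp. `m₂`) are
related by the (ε,δ)-lifting of `{(m₁',m₂') | m₁' x = m₂' x}`. -/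
theorem lift_assign {Var V : Type*} [DecidableEq Var] [Countable V]
    (ε δ : ℝ) (hε : 0 ≤ ε) (hδ : 0 ≤ δ)
    (ν₁ ν₂ : V → ℝ≥0∞) (hν₁ : (∑' v, ν₁ v) ≤ 1) (hν₂ : (∑' v, ν₂ v) ≤ 1)
    (h₁ : eDist ε ν₁ ν₂ ≤ ENNReal.ofReal δ)
    (h₂ : eDist ε ν₂ ν₁ ≤ ENNReal.ofReal δ)
    (x : Var) (m₁ m₂ : Var → V) :
    lift (fun m₁' m₂' => m₁' x = m₂' x) ε δ
      (assignD x ν₁ m₁) (assignD x ν₂ m₂) := by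
  classical
  set νm : V → ℝ≥0∞ := fun v => min (ν₁ v) (ν₂ v) with hνm
  set μW : ((Var → V) × (Var → V)) → ℝ≥0∞ := fun p =>
    if p.1 = Function.update m₁ x (p.1 x) ∧ p.2 = Function.update m₂ x (p.1 x)
    then νm (p.1 x) else 0 with hμW
  have hfst : fstMarg μW = assignD x νm m₁ := by
    funext m₁'
    show (∑' m₂', μW (m₁', m₂')) = _
    rw [tsum_eq_single (Function.update m₂ x (m₁' x)) ?_]
    · simp only [hμW, assignD]
      by_cases h : m₁' = Function.update m₁ x (m₁' x)
      · rw [if_pos ⟨h, trivial⟩, if_pos h]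
      · rw [if_neg (fun hc => h hc.1), if_neg h]
    · intro b hb
      simp only [hμW]
      rw [if_neg]
      rintro ⟨-, h2⟩
      exact hb h2
  have hsnd : sndMarg μW = assignD x νm m₂ := by
    funext m₂'
    show (∑' m₁', μW (m₁', m₂')) = _
    rw [tsum_eq_single (Function.update m₁ x (m₂' x)) ?_]
    · simp only [hμW, assignD, Function.update_self]
      by_cases h : m₂' = Function.update m₂ x (m₂' x)
      · rw [if_pos ⟨trivial, h⟩, if_pos h]
      · rw [if_neg (fun hc => h hc.2), if_neg h]
    · intro a ha
      simp only [hμW]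
      rw [if_neg]
      rintro ⟨h1, h2⟩
      apply ha
      have hx : m₂' x = a x := by rw [h2, Function.update_self]
      rw [hx, ← h1]
  have hDom : ∀ (m : Var → V) (ν : V → ℝ≥0∞), ∀ a, assignD x νm m a ≤ assignD x ν m a →
      True := fun _ _ _ _ => trivial
  refine ⟨μW, ?_, ?_, ?_, ?_, ?_, ?_⟩
  · -- total mass
    rw [ENNReal.tsum_prod']
    have : (∑' a, ∑' b, μW (a, b)) = ∑' a, assignD x νm m₁ a := by
      refine tsum_congr fun a => ?_
      exact congrFun hfst a
    rw [this, ← tsum_univ (assignD x νm m₁), tsum_assignD]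
    refine le_trans ?_ hν₁
    rw [show {v : V | Function.update m₁ x v ∈ (Set.univ : Set (Var → V))} = Set.univ
      by simp]
    rw [tsum_univ]
    exact ENNReal.tsum_le_tsum fun v => min_le_left _ _
  · -- support
    rintro ⟨a, b⟩ hne
    simp only [hμW, ne_eq, ite_eq_right_iff, not_forall] at hne
    obtain ⟨⟨h1, h2⟩, -⟩ := hne
    show a x = b x
    rw [h2, Function.update_self]
  · intro a
    rw [hfst]
    simp only [assignD]
    split <;> simp [hνm, min_le_left]
  · intro b
    rw [hsnd]
    simp only [assignD]
    split <;> simp [hνm, min_le_right]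
  · rw [hfst]
    refine iSup_le fun S => ?_
    rw [tsum_assignD, tsum_assignD]
    exact le_trans (eDist_min_le ε hε ν₁ ν₂ _) h₁
  · rw [hsnd]
    refine iSup_le fun S => ?_
    rw [tsum_assignD, tsum_assignD]
    have hcomm : (∑' v : {v : V | Function.update m₂ x v ∈ S}, νm v)
        = ∑' v : {v : V | Function.update m₂ x v ∈ S}, min (ν₂ v) (ν₁ v) := by
      refine tsum_congr fun v => min_comm _ _
    rw [hcomm]
    exact le_trans (eDist_min_le ε hε ν₂ ν₁ _) h₂
end
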